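/- Let X be a Lévy process and let γ>0 satisfy E[e^{γ X_1}]=1. Then for all t>0 and x>0, e^{γ x} P(t < τ(x) < ∞) ≤ E[ e^{γ X_t} 1_{X_t ≤ x} ]. -/

import Mathlib

open MeasureTheory ProbabilityTheory Filter Set

/-- A (real-valued) Lévy process: `X 0 = 0` a.s., a.s. càdlàg paths on `[0,∞)`,
and stationary independent increments. -/
structure LevyProcess {Ω : Type*} [MeasurableSpace Ω] (P : Measure Ω)
    (X : ℝ → Ω → ℝ) : Prop where
  meas : ∀ t : ℝ, Measurable (X t)
  init : ∀ᵐ ω ∂P, X 0 ω = 0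
  rightCont : ∀ᵐ ω ∂P, ∀ t : ℝ, 0 ≤ t →
    ContinuousWithinAt (fun s => X s ω) (Set.Ici t) t
  leftLimits : ∀ᵐ ω ∂P, ∀ t : ℝ, 0 < t →
    ∃ l : ℝ, Filter.Tendsto (fun s => X s ω) (nhdsWithin t (Set.Ico 0 t)) (nhds l)
  stat : ∀ s t : ℝ, 0 ≤ s → s ≤ t →
    Measure.map (fun ω => X t ω - X s ω) P = Measure.map (X (t - s)) P
  indep : ∀ s t : ℝ, 0 ≤ s → s ≤ t →
    Indep (⨆ u ∈ Set.Icc (0:ℝ) s, MeasurableSpace.comap (X u) inferInstance)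
      (MeasurableSpace.comap (fun ω => X t ω - X s ω) inferInstance) P

/-- The Laplace exponent `ψ(θ) = log E[exp (θ W)]`. -/
noncomputable def laplaceExponent {Ω : Type*} [MeasurableSpace Ω] (P : Measure Ω)
    (W : Ω → ℝ) (θ : ℝ) : ℝ :=
  Real.log (∫ ω, Real.exp (θ * W ω) ∂P)

/-- The domain `Θ = {θ : E[exp (θ W)] < ∞}` of the Laplace exponent. -/
def laplaceDomain {Ω : Type*} [MeasurableSpace Ω] (P : Measure Ω)
    (W : Ω → ℝ) : Set ℝ :=
  {θ : ℝ | Integrable (fun ω => Real.exp (θ * W ω)) P}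

open scoped ENNReal Topology

/-!
Under the Esscher normalisation `E[e^{γ X₁}] = 1` the process `e^{γ X_t}` is a nonnegative
supermartingale: independence and stationarity of increments make `u ↦ E[e^{γ X_u}]`
multiplicative, hence equal to `1` at rational times, and Fatou's lemma along rational times
decreasing to `u`, with right-continuity of paths, gives `E[e^{γ X_u}] ≤ 1` for all `u ≥ 0`.
Doob's maximal inequality for this supermartingale started at time `t` on the event
`{X_t ≤ x}` bounds `e^{γ x} P(X_t ≤ x, X_s > x for some rational s > t)` by
`E[e^{γ X_t}; X_t ≤ x]`, and by right-continuity an overshoot of `x` after time `t` is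
witnessed at a rational time.
-/

noncomputable section

/- Moments are lower integrals of this `ℝ≥0∞`-valued density, so `E[e^{γ X_u}]` needs no
integrability assumption (a priori it may be `∞`). -/
def expTilt (γ y : ℝ) : ℝ≥0∞ := ENNReal.ofReal (Real.exp (γ * y))

theorem continuous_expTilt (γ : ℝ) : Continuous (expTilt γ) :=
  ENNReal.continuous_ofReal.comp (by fun_prop)

theorem measurable_expTilt (γ : ℝ) : Measurable (expTilt γ) :=
  (continuous_expTilt γ).measurable

theorem expTilt_add (γ a b : ℝ) : expTilt γ (a + b) = expTilt γ a * expTilt γ b := by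
  rw [expTilt, expTilt, expTilt, ← ENNReal.ofReal_mul (Real.exp_nonneg _), ← Real.exp_add,
    mul_add]

theorem expTilt_mono {γ : ℝ} (hγ : 0 ≤ γ) : Monotone (expTilt γ) := fun _ _ h =>
  ENNReal.ofReal_le_ofReal (Real.exp_le_exp.2 (mul_le_mul_of_nonneg_left h hγ))

theorem integral_exp_mul_eq_toReal_lintegral_expTilt {Ω : Type*} [MeasurableSpace Ω]
    {μ : Measure Ω} {W : Ω → ℝ} (hW : Measurable W) (γ : ℝ) :
    ∫ ω, Real.exp (γ * W ω) ∂μ = (∫⁻ ω, expTilt γ (W ω) ∂μ).toReal :=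
  integral_eq_lintegral_of_nonneg_ae (ae_of_all _ fun _ => Real.exp_nonneg _)
    (by fun_prop)

theorem apply_ratCast_eq_one_of_map_add_eq_mul {M : ℝ → ℝ≥0∞}
    (hadd : ∀ u v, 0 ≤ u → 0 ≤ v → M (u + v) = M u * M v) (h1 : M 1 = 1)
    {q : ℚ} (hq : 0 ≤ q) : M q = 1 := by
  have hM0 : M 0 = 1 := by
    simpa [h1] using (hadd 0 1 le_rfl zero_le_one).symm
  have hpow : ∀ c, 0 ≤ c → ∀ n : ℕ, M (n * c) = M c ^ n := by
    intro c hc n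
    induction n with
    | zero => simpa using hM0
    | succ n ih =>
      rw [Nat.cast_succ, add_one_mul, hadd _ _ (by positivity) hc, ih, pow_succ]
  have hden : (q.den : ℝ) ≠ 0 := Nat.cast_ne_zero.2 q.den_nz
  have hunit : M (1 / q.den) = 1 := by
    have h := hpow (1 / q.den) (by positivity) q.den
    rw [mul_one_div_cancel hden, h1] at h
    refine le_antisymm ?_ ?_
    · simpa using (ENNReal.pow_le_pow_left_iff q.den_nz).1 (h.symm.le.trans (one_pow _).ge)
    · simpa using (ENNReal.pow_le_pow_left_iff q.den_nz).1 ((one_pow _).le.trans h.le)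
  have hq' : (q : ℝ) = (q.num.toNat : ℕ) * (1 / q.den) := by
    have hnum : ((q.num.toNat : ℕ) : ℝ) = q.num := by
      exact_mod_cast Int.toNat_of_nonneg (Rat.num_nonneg.2 hq)
    rw [hnum, Rat.cast_def, mul_one_div]
  rw [hq', hpow _ (by positivity), hunit, one_pow]

section MaximalInequality

variable {Ω : Type*} {m : MeasurableSpace Ω} {P : Measure Ω} {ℱ : ℝ → MeasurableSpace Ω}
  {Y : ℝ → Ω → ℝ≥0∞}

theorem maximal_ineq_finset (hℱle : ∀ r, ℱ r ≤ m) (hℱ : Monotone ℱ)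
    (hY : ∀ r, 0 ≤ r → Measurable[ℱ r] (Y r))
    (hsuper : ∀ r s, 0 ≤ r → r ≤ s → ∀ C, MeasurableSet[ℱ r] C →
      ∫⁻ ω in C, Y s ω ∂P ≤ ∫⁻ ω in C, Y r ω ∂P)
    (c : ℝ≥0∞) (F : Finset ℝ) {r : ℝ} (hr : 0 ≤ r) (hrF : ∀ s ∈ F, r ≤ s) {C : Set Ω}
    (hC : MeasurableSet[ℱ r] C) :
    c * P (C ∩ ⋃ s ∈ F, {ω | c ≤ Y s ω}) ≤ ∫⁻ ω in C, Y r ω ∂P := by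
  classical
  induction F using Finset.induction_on_min generalizing r C with
  | empty => simp
  | insert a F haF ih =>
    have hra : r ≤ a := hrF a (Finset.mem_insert_self a F)
    have ha : 0 ≤ a := hr.trans hra
    set B := {ω | c ≤ Y a ω}
    have hB : MeasurableSet[ℱ a] B := measurableSet_le measurable_const (hY a ha)
    have hcover : C ∩ ⋃ s ∈ insert a F, {ω | c ≤ Y s ω} ⊆
        C ∩ B ∪ (C \ B) ∩ ⋃ s ∈ F, {ω | c ≤ Y s ω} := by
      rintro ω ⟨hωC, hω⟩
      by_cases hωB : ω ∈ B
      · exact Or.inl ⟨hωC, hωB⟩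
      · simp only [Finset.set_biUnion_insert, mem_union] at hω
        exact Or.inr ⟨⟨hωC, hωB⟩, hω.resolve_left hωB⟩
    have hfirst : c * P (C ∩ B) ≤ ∫⁻ ω in C ∩ B, Y a ω ∂P := by
      rw [← setLIntegral_const]
      exact setLIntegral_mono ((hY a ha).mono (hℱle a) le_rfl) fun ω hω => hω.2
    have hsecond := ih ha (fun s hs => (haF s hs).le) ((hℱ hra _ hC).diff hB)
    calc c * P (C ∩ ⋃ s ∈ insert a F, {ω | c ≤ Y s ω})
        ≤ c * P (C ∩ B) + c * P ((C \ B) ∩ ⋃ s ∈ F, {ω | c ≤ Y s ω}) := by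
          rw [← mul_add]
          gcongr
          exact (measure_mono hcover).trans (measure_union_le _ _)
      _ ≤ (∫⁻ ω in C ∩ B, Y a ω ∂P) + ∫⁻ ω in C \ B, Y a ω ∂P := add_le_add hfirst hsecond
      _ = ∫⁻ ω in C, Y a ω ∂P := lintegral_inter_add_sdiff _ _ (hℱle a _ hB)
      _ ≤ ∫⁻ ω in C, Y r ω ∂P := hsuper r a hr hra C hC

end MaximalInequality

theorem ContinuousWithinAt.exists_ratCast_gt_lt {f : ℝ → ℝ} {s x : ℝ}
    (hf : ContinuousWithinAt f (Ici s) s) (hx : x < f s) : ∃ q : ℚ, s < q ∧ x < f q := by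
  have hev : {u | x < f u} ∈ 𝓝[>] s :=
    nhdsWithin_mono _ Ioi_subset_Ici_self (hf.eventually (lt_mem_nhds hx))
  obtain ⟨u, hsu, hu⟩ := mem_nhdsGT_iff_exists_Ioo_subset.1 hev
  obtain ⟨q, hsq, hqu⟩ := exists_rat_btwn (show s < u from hsu)
  exact ⟨q, hsq, hu ⟨hsq, hqu⟩⟩

variable {Ω : Type*} {X : ℝ → Ω → ℝ}

abbrev history (X : ℝ → Ω → ℝ) (r : ℝ) : MeasurableSpace Ω :=
  ⨆ u ∈ Icc (0 : ℝ) r, MeasurableSpace.comap (X u) inferInstance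

theorem history_mono : Monotone (history X) := fun _ _ h =>
  iSup₂_le fun u hu => le_iSup₂ (f := fun u (_ : u ∈ Icc (0 : ℝ) _) =>
    MeasurableSpace.comap (X u) inferInstance) u ⟨hu.1, hu.2.trans h⟩

theorem measurable_history {r u : ℝ} (hu : u ∈ Icc 0 r) : Measurable[history X r] (X u) :=
  measurable_iff_comap_le.2 <| le_iSup₂ (f := fun u (_ : u ∈ Icc (0 : ℝ) r) =>
    MeasurableSpace.comap (X u) inferInstance) u hu

variable [MeasurableSpace Ω] {P : Measure Ω} {γ : ℝ}

def expMoment (P : Measure Ω) (X : ℝ → Ω → ℝ) (γ u : ℝ) : ℝ≥0∞ :=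
  ∫⁻ ω, expTilt γ (X u ω) ∂P

namespace LevyProcess

theorem history_le (hX : LevyProcess P X) (r : ℝ) : history X r ≤ ‹MeasurableSpace Ω› :=
  iSup₂_le fun u _ => (hX.meas u).comap_le

theorem setLIntegral_expTilt_eq_mul (hX : LevyProcess P X) {r s : ℝ} (hr : 0 ≤ r)
    (hrs : r ≤ s) {C : Set Ω} (hC : MeasurableSet[history X r] C) :
    ∫⁻ ω in C, expTilt γ (X s ω) ∂P =
      (∫⁻ ω in C, expTilt γ (X r ω) ∂P) * expMoment P X γ (s - r) := by
  have hCm : MeasurableSet C := hX.history_le r _ hC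
  have hinc : Measurable fun ω => X s ω - X r ω := (hX.meas s).sub (hX.meas r)
  set F := C.indicator fun ω => expTilt γ (X r ω)
  set G := fun ω => expTilt γ (X s ω - X r ω)
  have hF : Measurable[history X r] F :=
    ((measurable_expTilt γ).comp (measurable_history ⟨hr, le_rfl⟩)).indicator hC
  have hG : Measurable[MeasurableSpace.comap (fun ω => X s ω - X r ω) inferInstance] G :=
    (measurable_expTilt γ).comp (comap_measurable _)
  have hindep : IndepFun F G P :=
    indep_of_indep_of_le_right (indep_of_indep_of_le_left (hX.indep r s hr hrs) hF.comap_le)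
      hG.comap_le
  have hFG : F * G = C.indicator fun ω => expTilt γ (X s ω) := by
    ext ω
    by_cases hω : ω ∈ C
    · simp [F, G, hω, ← expTilt_add]
    · simp [F, hω]
  have hGint : ∫⁻ ω, G ω ∂P = expMoment P X γ (s - r) := by
    rw [expMoment, ← lintegral_map (measurable_expTilt γ) hinc, hX.stat r s hr hrs,
      lintegral_map (measurable_expTilt γ) (hX.meas _)]
  rw [← lintegral_indicator hCm, ← lintegral_indicator hCm, ← hFG, ← hGint]
  exact lintegral_mul_eq_lintegral_mul_lintegral_of_indepFun''
    (hF.mono (hX.history_le r) le_rfl).aemeasurable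
    (hG.mono hinc.comap_le le_rfl).aemeasurable hindep

theorem expMoment_add (hX : LevyProcess P X) {u v : ℝ} (hu : 0 ≤ u) (hv : 0 ≤ v) :
    expMoment P X γ (u + v) = expMoment P X γ u * expMoment P X γ v := by
  simpa [expMoment] using hX.setLIntegral_expTilt_eq_mul (γ := γ) hu (le_add_of_nonneg_right hv)
    (C := univ) MeasurableSet.univ

theorem expMoment_ratCast (hX : LevyProcess P X) (h1 : expMoment P X γ 1 = 1) {q : ℚ}
    (hq : 0 ≤ q) : expMoment P X γ q = 1 :=
  apply_ratCast_eq_one_of_map_add_eq_mul (fun _ _ => hX.expMoment_add) h1 hq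

theorem expMoment_le_one (hX : LevyProcess P X) (h1 : expMoment P X γ 1 = 1) {u : ℝ}
    (hu : 0 ≤ u) : expMoment P X γ u ≤ 1 := by
  obtain ⟨q, -, hqu, hq⟩ := Real.exists_seq_rat_strictAnti_tendsto u
  have hconv : ∀ᵐ ω ∂P,
      Tendsto (fun n => expTilt γ (X (q n) ω)) atTop (𝓝 (expTilt γ (X u ω))) := by
    filter_upwards [hX.rightCont] with ω hω
    exact (continuous_expTilt γ).continuousAt.tendsto.comp <| (hω u hu).tendsto.comp <|
      tendsto_nhdsWithin_of_tendsto_nhds_of_eventually_within _ hq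
        (Eventually.of_forall fun n => (hqu n).le)
  have hq0 : ∀ n, (0 : ℚ) ≤ q n := fun n => by exact_mod_cast hu.trans (hqu n).le
  calc expMoment P X γ u = ∫⁻ ω, liminf (fun n => expTilt γ (X (q n) ω)) atTop ∂P :=
        lintegral_congr_ae (hconv.mono fun ω hω => hω.liminf_eq.symm)
    _ ≤ liminf (fun n => expMoment P X γ (q n)) atTop :=
        lintegral_liminf_le fun n => (measurable_expTilt γ).comp (hX.meas _)
    _ = 1 := by simp [hX.expMoment_ratCast h1 (hq0 _)]

theorem setLIntegral_expTilt_antitone (hX : LevyProcess P X) (h1 : expMoment P X γ 1 = 1)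
    {r s : ℝ} (hr : 0 ≤ r) (hrs : r ≤ s) {C : Set Ω} (hC : MeasurableSet[history X r] C) :
    ∫⁻ ω in C, expTilt γ (X s ω) ∂P ≤ ∫⁻ ω in C, expTilt γ (X r ω) ∂P := by
  rw [hX.setLIntegral_expTilt_eq_mul hr hrs hC]
  exact mul_le_of_le_one_right' (hX.expMoment_le_one h1 (sub_nonneg.2 hrs))

theorem mul_measure_inter_exceed_le (hX : LevyProcess P X) (hγ : 0 ≤ γ)
    (h1 : expMoment P X γ 1 = 1) {t x : ℝ} (ht : 0 ≤ t) {T : Set Ω}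
    (hT : MeasurableSet[history X t] T) :
    expTilt γ x * P (T ∩ ⋃ (q : ℚ) (_ : t < q), {ω | x < X q ω}) ≤
      ∫⁻ ω in T, expTilt γ (X t ω) ∂P := by
  classical
  have hmono : Monotone fun F : Finset ℚ => T ∩ ⋃ q ∈ F, ⋃ (_ : t < q), {ω | x < X q ω} :=
    fun F G hFG => inter_subset_inter_right _ (biUnion_subset_biUnion_left hFG)
  rw [iUnion_eq_iUnion_finset, inter_iUnion, hmono.directed_le.measure_iUnion, ENNReal.mul_iSup]
  refine iSup_le fun F => le_trans ?_ <|
    maximal_ineq_finset hX.history_le history_mono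
      (fun r hr => (measurable_expTilt γ).comp (measurable_history ⟨hr, le_rfl⟩))
      (fun r s hr hrs C hC => hX.setLIntegral_expTilt_antitone h1 hr hrs hC)
      (expTilt γ x) ((F.filter fun q : ℚ => t < q).image (↑)) ht
      (fun s hs => by
        obtain ⟨q, hq, rfl⟩ := Finset.mem_image.1 hs
        exact (Finset.mem_filter.1 hq).2.le) hT
  gcongr
  intro ω
  simp only [mem_iUnion, Finset.mem_image, Finset.mem_filter]
  rintro ⟨q, hqF, htq, hxq⟩
  exact ⟨q, ⟨q, ⟨hqF, htq⟩, rfl⟩, expTilt_mono hγ hxq.le⟩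

theorem ae_passage_after_subset (hX : LevyProcess P X) {t x : ℝ} (ht : 0 ≤ t) :
    ({ω | (∀ s : ℝ, 0 ≤ s → s ≤ t → X s ω ≤ x) ∧ ∃ s : ℝ, 0 ≤ s ∧ x < X s ω} : Set Ω) ≤ᵐ[P]
      ({ω | X t ω ≤ x} ∩ ⋃ (q : ℚ) (_ : t < q), {ω | x < X q ω} : Set Ω) := by
  filter_upwards [hX.rightCont] with ω hω ⟨hbelow, s, hs, hxs⟩
  have hts : t < s := lt_of_not_ge fun hst => (hbelow s hs hst).not_gt hxs
  obtain ⟨q, hsq, hxq⟩ := (hω s hs).exists_ratCast_gt_lt hxs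
  exact ⟨hbelow t ht le_rfl, mem_iUnion₂.2 ⟨q, hts.trans hsq, hxq⟩⟩

end LevyProcess

end

/-- Here `{t < τ(x) < ∞}` is encoded as `{∀ s ∈ [0,t], X_s ≤ x} ∩ {∃ s ≥ 0, X_s > x}`. -/
theorem ruin_after_t_bound_general
    {Ω : Type*} [MeasurableSpace Ω] (P : Measure Ω)
    (X : ℝ → Ω → ℝ) (hX : LevyProcess P X)
    (γ : ℝ) (hγpos : 0 < γ)
    (hγ : ∫ ω, Real.exp (γ * X 1 ω) ∂P = 1) :
    ∀ t x : ℝ, 0 < t → 0 < x →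
      Real.exp (γ * x) *
        (P {ω | (∀ s : ℝ, 0 ≤ s → s ≤ t → X s ω ≤ x) ∧ ∃ s : ℝ, 0 ≤ s ∧ x < X s ω}).toReal ≤
      ∫ ω in {ω | X t ω ≤ x}, Real.exp (γ * X t ω) ∂P := by
  intro t x ht _
  have h1 : expMoment P X γ 1 = 1 := by
    rwa [integral_exp_mul_eq_toReal_lintegral_expTilt (hX.meas 1), ENNReal.toReal_eq_one_iff]
      at hγ
  have hT : MeasurableSet[history X t] {ω | X t ω ≤ x} :=
    measurableSet_le (measurable_history ⟨ht.le, le_rfl⟩) measurable_const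
  have hfinite : ∫⁻ ω in {ω | X t ω ≤ x}, expTilt γ (X t ω) ∂P ≠ ⊤ :=
    ne_top_of_le_ne_top ENNReal.one_ne_top
      ((setLIntegral_le_lintegral _ _).trans (hX.expMoment_le_one h1 ht.le))
  rw [integral_exp_mul_eq_toReal_lintegral_expTilt (hX.meas t),
    ← ENNReal.toReal_ofReal (Real.exp_nonneg (γ * x)), ← ENNReal.toReal_mul]
  exact ENNReal.toReal_mono hfinite <|
    (mul_le_mul_right (measure_mono_ae (hX.ae_passage_after_subset ht.le)) _).trans
      (hX.mul_measure_inter_exceed_le hγpos.le h1 ht.le hT)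

/-- If `E[e^{γ X₁}] = 1` with `γ > 0`, then for all `t, x > 0`,
`e^{γ x} P(t < τ(x) < ∞) ≤ E[e^{γ X_t} 1_{X_t ≤ x}]`.
Here `{t < τ(x) < ∞} = {∀ s ∈ [0,t], X_s ≤ x} ∩ {∃ s ≥ 0, X_s > x}`,
using `{τ(x) ≤ t} = {sup_{s ≤ t} X_s > x}`. -/
theorem ruin_after_t_bound
    {Ω : Type*} [MeasurableSpace Ω] (P : Measure Ω) [IsProbabilityMeasure P]
    (X : ℝ → Ω → ℝ) (hX : LevyProcess P X)
    (γ : ℝ) (hγpos : 0 < γ)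
    (hγ : ∫ ω, Real.exp (γ * X 1 ω) ∂P = 1) :
    ∀ t x : ℝ, 0 < t → 0 < x →
      Real.exp (γ * x) *
        (P {ω | (∀ s : ℝ, 0 ≤ s → s ≤ t → X s ω ≤ x) ∧ ∃ s : ℝ, 0 ≤ s ∧ x < X s ω}).toReal ≤
      ∫ ω in {ω | X t ω ≤ x}, Real.exp (γ * X t ω) ∂P :=
  ruin_after_t_bound_general P X hX γ hγpos hγ
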